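/- If G is a friendly-edge-colorable simple graph of class II (i.e., χ'(G) = Δ(G)+1), then ν(G \ x) = ν(G) for every vertex x, and consequently every component of G is factor-critical. -/

import Mathlib

open scoped Classical

/-- `M` is a matching of `G`, given as a finite set of edges. -/
def IsMatchingFinset {V : Type*} (G : SimpleGraph V) (M : Finset (Sym2 V)) : Prop :=
  (M : Set (Sym2 V)) ⊆ G.edgeSet ∧
    ∀ e ∈ M, ∀ f ∈ M, e ≠ f → ∀ v : V, ¬(v ∈ e ∧ v ∈ f)

/-- ν(G): the maximum size of a matching of `G`. -/
noncomputable def matchingNumber {V : Type*} (G : SimpleGraph V) : ℕ :=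
  sSup {n | ∃ M : Finset (Sym2 V), IsMatchingFinset G M ∧ M.card = n}

/-- A proper edge coloring of `G` using colors `< n`. -/
def IsProperEdgeColoring {V : Type*} (G : SimpleGraph V) (n : ℕ) (c : Sym2 V → ℕ) : Prop :=
  (∀ e ∈ G.edgeSet, c e < n) ∧
    ∀ e ∈ G.edgeSet, ∀ f ∈ G.edgeSet, e ≠ f → (∃ v : V, v ∈ e ∧ v ∈ f) → c e ≠ c f

/-- χ'(G): the edge chromatic index of `G`. -/
noncomputable def chromaticIndex {V : Type*} (G : SimpleGraph V) : ℕ :=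
  sInf {n | ∃ c : Sym2 V → ℕ, IsProperEdgeColoring G n c}

/-- `G` is friendly-edge-colorable: its edge set is partitioned into maximum matchings. -/
noncomputable def Friendly {V : Type*} [Fintype V] (G : SimpleGraph V) : Prop :=
  ∃ P : Finset (Finset (Sym2 V)),
    (∀ M ∈ P, IsMatchingFinset G M ∧ M.card = matchingNumber G) ∧
    (∀ e, e ∈ G.edgeFinset ↔ ∃ M ∈ P, e ∈ M) ∧
    ∀ M ∈ P, ∀ N ∈ P, M ≠ N → Disjoint M N

/-- The graph `G` with vertex `x` deleted. -/
def delVert {V : Type*} (G : SimpleGraph V) (x : V) : SimpleGraph {v : V // v ≠ x} :=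
  G.induce {v : V | v ≠ x}

/-- `G` has a perfect matching. -/
def HasPerfectMatchingFinset {V : Type*} (G : SimpleGraph V) : Prop :=
  ∃ M : Finset (Sym2 V), IsMatchingFinset G M ∧ ∀ v : V, ∃ e ∈ M, v ∈ e

/-- `G` is factor-critical. -/
def FactorCritical {V : Type*} (G : SimpleGraph V) : Prop :=
  G.Connected ∧ ∀ x : V, HasPerfectMatchingFinset (delVert G x)

/-!
Partitioning `E(G)` into `k` maximum matchings is a proper edge colouring, so `k ≥ χ'(G) = Δ + 1`;
as the matchings are disjoint, at most `deg x ≤ Δ` of them cover `x`. Hence every vertex `x` is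
missed by some maximum matching, which gives `ν(G - x) = ν(G)`, and Gallai's lemma turns this into
factor-criticality of the components.

For Gallai's lemma encode a matching by its partner map, an involution whose fixed points are the
unmatched vertices. Suppose a maximum matching `f` misses two vertices `u ≠ v` of one component,
at minimal distance, let `w` be the neighbour of `u` on a shortest `u`-`v` path and `g` a maximum
matching missing `w`. On the component `T` of `u` in `f ∪ g` (a path or a cycle) `f` and `g` have
at most two fixed points together, and maximality forces them to have equally many. Exchanging `f`
and `g` on `T` keeps the matching maximum and leaves unmatched either the adjacent `u` and `w`,
which is impossible, or `w` and `v`, which are closer.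
-/

open Finset Function

section MatchingFinset

variable {V : Type*} {G : SimpleGraph V}

lemma IsMatchingFinset.eq_of_mk_mem {M : Finset (Sym2 V)} (hM : IsMatchingFinset G M)
    {v w w' : V} (hw : s(v, w) ∈ M) (hw' : s(v, w') ∈ M) : w = w' := by
  by_contra hne
  exact hM.2 _ hw _ hw' (fun h => hne (Sym2.congr_right.mp h)) v
    ⟨Sym2.mem_mk_left v w, Sym2.mem_mk_left v w'⟩

variable [Fintype V]

lemma bddAbove_matchingSizes :
    BddAbove {n | ∃ M : Finset (Sym2 V), IsMatchingFinset G M ∧ #M = n} := by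
  refine ⟨#G.edgeFinset, ?_⟩
  rintro n ⟨M, hM, rfl⟩
  exact card_le_card fun e he => G.mem_edgeFinset.mpr (hM.1 he)

lemma IsMatchingFinset.card_le_matchingNumber {M : Finset (Sym2 V)} (hM : IsMatchingFinset G M) :
    #M ≤ matchingNumber G :=
  le_csSup bddAbove_matchingSizes ⟨M, hM, rfl⟩

lemma matchingNumber_le_of_embedding {W : Type*} {H : SimpleGraph W} (φ : H ↪g G) :
    matchingNumber H ≤ matchingNumber G := by
  refine csSup_le' ?_
  rintro n ⟨M, hM, rfl⟩
  have hinj : Injective (Sym2.map φ) := Sym2.map.injective φ.injective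
  rw [← card_image_of_injective M hinj]
  refine IsMatchingFinset.card_le_matchingNumber ⟨?_, ?_⟩
  · simp only [coe_image, Set.image_subset_iff]
    intro e he
    induction e using Sym2.ind with
    | _ a b => simpa using φ.map_adj_iff.mpr (hM.1 he)
  · simp only [mem_image]
    rintro _ ⟨d, hd, rfl⟩ _ ⟨d', hd', rfl⟩ hne v ⟨hv, hv'⟩
    obtain ⟨a, ha, rfl⟩ := Sym2.mem_map.mp hv
    obtain ⟨a', ha', haa'⟩ := Sym2.mem_map.mp hv'
    cases φ.injective haa'
    exact hM.2 d hd d' hd' (fun h => hne (h ▸ rfl)) a ⟨ha, ha'⟩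

end MatchingFinset

section MatchingInvolution

variable {V : Type*} {G : SimpleGraph V} {f g : V → V}

def IsMatchingInvolution (G : SimpleGraph V) (f : V → V) : Prop :=
  Involutive f ∧ ∀ v, f v ≠ v → G.Adj v (f v)

lemma IsMatchingInvolution.restrict {s : Set V} (hf : IsMatchingInvolution G f)
    (hs : Set.MapsTo f s s) : IsMatchingInvolution (G.induce s) (hs.restrict f s s) :=
  ⟨fun v => Subtype.ext (hf.1 v), fun v hv => hf.2 v fun h => hv (Subtype.ext h)⟩

lemma IsMatchingInvolution.piecewise {T : Finset V} (hf : IsMatchingInvolution G f)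
    (hg : IsMatchingInvolution G g) (hTf : ∀ v ∈ T, f v ∈ T) (hTg : ∀ v ∈ T, g v ∈ T) :
    IsMatchingInvolution G (T.piecewise f g) := by
  have hTg' : ∀ v ∉ T, g v ∉ T := fun v hv hgv => hv (hg.1 v ▸ hTg _ hgv)
  constructor
  · intro v
    by_cases hv : v ∈ T
    · rw [T.piecewise_eq_of_mem f g hv, T.piecewise_eq_of_mem f g (hTf v hv), hf.1 v]
    · rw [T.piecewise_eq_of_notMem f g hv, T.piecewise_eq_of_notMem f g (hTg' v hv), hg.1 v]
  · intro v
    by_cases hv : v ∈ T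
    · rw [T.piecewise_eq_of_mem f g hv]; exact hf.2 v
    · rw [T.piecewise_eq_of_notMem f g hv]; exact hg.2 v

variable [Fintype V]

noncomputable def matchingOf (f : V → V) : Finset (Sym2 V) :=
  ({v | f v ≠ v} : Finset V).image fun v => s(v, f v)

lemma mk_mem_matchingOf {v : V} (hv : f v ≠ v) : s(v, f v) ∈ matchingOf f :=
  mem_image_of_mem _ (by simpa using hv)

lemma eq_mk_of_mem_matchingOf (hf : Involutive f) {v : V} {e : Sym2 V} (he : e ∈ matchingOf f)
    (hv : v ∈ e) : e = s(v, f v) ∧ f v ≠ v := by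
  obtain ⟨a, ha, rfl⟩ := mem_image.mp he
  have ha : f a ≠ a := by simpa using ha
  rcases Sym2.mem_iff.mp hv with rfl | rfl
  · exact ⟨rfl, ha⟩
  · rw [hf a, Sym2.eq_swap]
    exact ⟨rfl, fun h => ha (by rw [← h])⟩

lemma IsMatchingInvolution.isMatchingFinset (hf : IsMatchingInvolution G f) :
    IsMatchingFinset G (matchingOf f) := by
  refine ⟨?_, fun e he e' he' hne v hv => hne ?_⟩
  · simp only [matchingOf, coe_image, Set.image_subset_iff]
    intro v hv
    exact hf.2 v (by simpa using hv)
  · exact (eq_mk_of_mem_matchingOf hf.1 he hv.1).1.trans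
      (eq_mk_of_mem_matchingOf hf.1 he' hv.2).1.symm

lemma two_mul_card_matchingOf (hf : Involutive f) :
    2 * #(matchingOf f) = #{v | f v ≠ v} := by
  rw [matchingOf, card_eq_sum_card_image (fun v => s(v, f v)), mul_comm, ← smul_eq_mul,
    ← sum_const]
  refine sum_congr rfl fun e he => ?_
  obtain ⟨v, hv, rfl⟩ := mem_image.mp he
  have hv : f v ≠ v := by simpa using hv
  have : ({a ∈ {v | f v ≠ v} | s(a, f a) = s(v, f v)} : Finset V) = {v, f v} := by
    ext a
    simp only [mem_filter, mem_univ, true_and, mem_insert, mem_singleton, Sym2.eq_iff]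
    constructor
    · rintro ⟨-, ⟨rfl, -⟩ | ⟨rfl, -⟩⟩ <;> simp
    · rintro (rfl | rfl)
      · exact ⟨hv, .inl ⟨rfl, rfl⟩⟩
      · rw [hf]
        exact ⟨fun h => hv h.symm, .inr ⟨rfl, rfl⟩⟩
  rw [this, card_pair hv.symm]

end MatchingInvolution

section MaxMatchingInvolution

variable {V : Type*} [Fintype V] {G : SimpleGraph V} {f g : V → V}

lemma card_fixed_add_two_mul_card_matchingOf (hf : Involutive f) :
    #{v | f v = v} + 2 * #(matchingOf f) = Fintype.card V := by
  rw [two_mul_card_matchingOf hf, card_filter_add_card_filter_not, card_univ]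

lemma IsMatchingInvolution.card_le_card_fixed_add (hf : IsMatchingInvolution G f) :
    Fintype.card V ≤ #{v | f v = v} + 2 * matchingNumber G := by
  have := hf.isMatchingFinset.card_le_matchingNumber
  have := card_fixed_add_two_mul_card_matchingOf hf.1
  omega

def IsMaxMatchingInvolution (G : SimpleGraph V) (f : V → V) : Prop :=
  IsMatchingInvolution G f ∧ #{v | f v = v} + 2 * matchingNumber G = Fintype.card V

lemma IsMatchingFinset.exists_isMatchingInvolution {M : Finset (Sym2 V)}
    (hM : IsMatchingFinset G M) :
    ∃ f, IsMatchingInvolution G f ∧ matchingOf f = M ∧ ∀ v, (∀ e ∈ M, v ∉ e) → f v = v := by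
  let f : V → V := fun v => if h : ∃ w, s(v, w) ∈ M then h.choose else v
  have hf : ∀ {v w}, s(v, w) ∈ M → f v = w := fun {v w} h => by
    have hex : ∃ w, s(v, w) ∈ M := ⟨w, h⟩
    simp only [f, dif_pos hex]
    exact hM.eq_of_mk_mem hex.choose_spec h
  have hfix : ∀ {v}, (¬∃ w, s(v, w) ∈ M) → f v = v := fun h => dif_neg h
  have hmem : ∀ {v}, f v ≠ v → s(v, f v) ∈ M := by
    intro v hv
    by_cases h : ∃ w, s(v, w) ∈ M
    · obtain ⟨w, hw⟩ := h
      rwa [hf hw]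
    · exact absurd (hfix h) hv
  have hinv : Involutive f := by
    intro v
    by_cases h : ∃ w, s(v, w) ∈ M
    · obtain ⟨w, hw⟩ := h
      rw [hf hw, hf (Sym2.eq_swap ▸ hw)]
    · rw [hfix h, hfix h]
  refine ⟨f, ⟨hinv, fun v hv => hM.1 (hmem hv)⟩, ?_, fun v hv => hfix ?_⟩
  · ext e
    refine ⟨fun he => ?_, fun he => ?_⟩
    · obtain ⟨v, hv, rfl⟩ := mem_image.mp he
      exact hmem (by simpa using hv)
    · induction e using Sym2.ind with
      | _ a b =>
        have hab : a ≠ b := G.ne_of_adj (hM.1 he)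
        rw [← hf he]
        exact mk_mem_matchingOf (by rw [hf he]; exact hab.symm)
  · rintro ⟨w, hw⟩
    exact hv _ hw (Sym2.mem_mk_left _ _)

lemma IsMaxMatchingInvolution.card_matchingOf (hf : IsMaxMatchingInvolution G f) :
    #(matchingOf f) = matchingNumber G := by
  have := card_fixed_add_two_mul_card_matchingOf hf.1.1
  have := hf.2
  omega

lemma IsMaxMatchingInvolution.not_adj (hf : IsMaxMatchingInvolution G f) {u v : V}
    (hu : f u = u) (hv : f v = v) : ¬G.Adj u v := by
  intro huv
  have hfree : ∀ {y e}, f y = y → e ∈ matchingOf f → y ∉ e := fun hy he hye =>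
    (eq_mk_of_mem_matchingOf hf.1.1 he hye).2 hy
  have hM := hf.1.isMatchingFinset
  have hM' : IsMatchingFinset G (insert s(u, v) (matchingOf f)) := by
    refine ⟨?_, ?_⟩
    · simpa [Set.insert_subset_iff] using ⟨huv, hM.1⟩
    · simp only [mem_insert]
      rintro e (rfl | he) e' (rfl | he') hne y ⟨hy, hy'⟩
      · exact hne rfl
      · rcases Sym2.mem_iff.mp hy with rfl | rfl
        exacts [hfree hu he' hy', hfree hv he' hy']
      · rcases Sym2.mem_iff.mp hy' with rfl | rfl
        exacts [hfree hu he hy, hfree hv he hy]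
      · exact hM.2 e he e' he' hne y ⟨hy, hy'⟩
  have := hM'.card_le_matchingNumber
  rw [card_insert_of_notMem fun h => hfree hu h (Sym2.mem_mk_left u v), hf.card_matchingOf] at this
  omega

variable {T : Finset V}

lemma card_fixed_piecewise_add :
    #{v | T.piecewise f g v = v} + #{v ∈ T | g v = v} = #{v ∈ T | f v = v} + #{v | g v = v} := by
  simp only [card_filter]
  rw [← sum_add_sum_compl T (fun v => if T.piecewise f g v = v then 1 else 0),
    ← sum_add_sum_compl T (fun v => if g v = v then 1 else 0),
    sum_congr rfl (g := fun v => if f v = v then 1 else 0)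
      fun v hv => by rw [T.piecewise_eq_of_mem f g hv],
    sum_congr rfl (s₁ := Tᶜ) (g := fun v => if g v = v then 1 else 0)
      fun v hv => by rw [T.piecewise_eq_of_notMem f g (mem_compl.mp hv)]]
  ring

lemma IsMaxMatchingInvolution.card_fixed_inter_eq (hf : IsMaxMatchingInvolution G f)
    (hg : IsMaxMatchingInvolution G g) (hTf : ∀ v ∈ T, f v ∈ T) (hTg : ∀ v ∈ T, g v ∈ T) :
    #{v ∈ T | f v = v} = #{v ∈ T | g v = v} := by
  have hfg := (hf.1.piecewise hg.1 hTf hTg).card_le_card_fixed_add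
  have hgf := (hg.1.piecewise hf.1 hTg hTf).card_le_card_fixed_add
  have := card_fixed_piecewise_add (T := T) (f := f) (g := g)
  have := card_fixed_piecewise_add (T := T) (f := g) (g := f)
  have := hf.2
  have := hg.2
  omega

lemma IsMaxMatchingInvolution.piecewise (hf : IsMaxMatchingInvolution G f)
    (hg : IsMaxMatchingInvolution G g) (hTf : ∀ v ∈ T, f v ∈ T) (hTg : ∀ v ∈ T, g v ∈ T) :
    IsMaxMatchingInvolution G (T.piecewise f g) := by
  refine ⟨hf.1.piecewise hg.1 hTf hTg, ?_⟩
  have := card_fixed_piecewise_add (T := T) (f := f) (g := g)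
  have := hf.card_fixed_inter_eq hg hTf hTg
  have := hg.2
  omega

end MaxMatchingInvolution

section AlternatingComponent

variable {V : Type*} [Fintype V]

lemma SimpleGraph.Connected.two_mul_card_le_sum_degree_add_two {G : SimpleGraph V}
    [DecidableRel G.Adj] (hG : G.Connected) : 2 * Fintype.card V ≤ ∑ v, G.degree v + 2 := by
  have := hG.card_vert_le_card_edgeSet_add_one
  rw [Nat.card_eq_fintype_card, Nat.card_eq_fintype_card, ← G.edgeFinset_card] at this
  rw [G.sum_degrees_eq_twice_card_edges]
  omega

def partnerGraph (f g : V → V) : SimpleGraph V := SimpleGraph.fromRel fun a b => f a = b ∨ g a = b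

lemma degree_partnerGraph_add_le {f g : V → V} (hf : Involutive f) (hg : Involutive g) (v : V) :
    (partnerGraph f g).degree v + (if f v = v then 1 else 0) + (if g v = v then 1 else 0) ≤ 2 := by
  have hsub : (partnerGraph f g).neighborFinset v ⊆
      ({f v} : Finset V).erase v ∪ ({g v} : Finset V).erase v := by
    intro w hw
    rw [SimpleGraph.mem_neighborFinset, partnerGraph, SimpleGraph.fromRel_adj] at hw
    obtain ⟨hvw, h⟩ := hw
    simp only [mem_union, mem_erase, mem_singleton]
    refine (?_ : w = f v ∨ w = g v).imp (⟨hvw.symm, ·⟩) (⟨hvw.symm, ·⟩)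
    rcases h with (h | h) | (h | h)
    · exact .inl h.symm
    · exact .inr h.symm
    · exact .inl (by rw [← h, hf w])
    · exact .inr (by rw [← h, hg w])
  have hone : ∀ a : V, #(({a} : Finset V).erase v) + (if a = v then 1 else 0) = 1 := fun a => by
    by_cases h : a = v
    · simp [h]
    · simp [h, erase_eq_of_notMem, Ne.symm h]
  have := (card_le_card hsub).trans (card_union_le _ _)
  rw [SimpleGraph.card_neighborFinset_eq_degree] at this
  have := hone (f v)
  have := hone (g v)
  omega

/-- Take for `T` the component of `u` in `partnerGraph f g`: its vertices have degree plus number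
of fixed points at most `2`, while as a connected graph it has at least `#T - 1` edges. -/
lemma exists_invariant_card_fixed_le_two {f g : V → V} (hf : Involutive f) (hg : Involutive g)
    (u : V) : ∃ T : Finset V, u ∈ T ∧ (∀ v ∈ T, f v ∈ T) ∧ (∀ v ∈ T, g v ∈ T) ∧
      #{v ∈ T | f v = v} + #{v ∈ T | g v = v} ≤ 2 := by
  let C := (partnerGraph f g).connectedComponentMk u
  have hclosed : ∀ φ : V → V, (φ = f ∨ φ = g) → ∀ v ∈ C, φ v ∈ C := by
    rintro φ hφ v hv
    by_cases hφv : φ v = v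
    · rwa [hφv]
    refine C.mem_supp_of_adj_mem_supp hv ?_
    simp only [partnerGraph, SimpleGraph.fromRel_adj]
    exact ⟨Ne.symm hφv, .inl (by rcases hφ with rfl | rfl <;> simp)⟩
  refine ⟨({v | v ∈ C} : Finset V), by simp only [mem_filter, mem_univ, true_and]; rfl, ?_, ?_, ?_⟩
  · simpa using hclosed f (.inl rfl)
  · simpa using hclosed g (.inr rfl)
  have hconn := C.connected_toSimpleGraph.two_mul_card_le_sum_degree_add_two
  have hdegC : ∀ v : C, C.toSimpleGraph.degree v = (partnerGraph f g).degree v := fun v => by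
    unfold SimpleGraph.ConnectedComponent.toSimpleGraph
    convert (partnerGraph f g).degree_induce_of_neighborSet_subset
      fun w hw => C.mem_supp_of_adj_mem_supp v.2 hw
    rfl
  simp only [hdegC] at hconn
  rw [← sum_subtype ({v | v ∈ C} : Finset V) (by simp) (fun v => (partnerGraph f g).degree v),
    Fintype.card_subtype] at hconn
  have hsum := sum_le_sum fun v (_ : v ∈ ({v | v ∈ C} : Finset V)) =>
    degree_partnerGraph_add_le hf hg v
  simp only [sum_add_distrib, sum_const, smul_eq_mul] at hsum
  simp only [card_filter]
  omega

end AlternatingComponent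

section DeleteVertex

variable {V : Type*} [Fintype V] {G : SimpleGraph V} {f : V → V} {x : V}

lemma IsMatchingInvolution.hasPerfectMatchingFinset_delVert (hf : IsMatchingInvolution G f)
    (hfix : ∀ v, f v = v ↔ v = x) : HasPerfectMatchingFinset (delVert G x) := by
  have hs : Set.MapsTo f {v | v ≠ x} {v | v ≠ x} := fun v hv hfv =>
    hv ((hf.1 v).symm.trans (by rw [hfv, (hfix x).mpr rfl]))
  have hF := hf.restrict hs
  refine ⟨matchingOf (hs.restrict f _ _), hF.isMatchingFinset, fun v => ⟨_, mk_mem_matchingOf ?_,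
    Sym2.mem_mk_left _ _⟩⟩
  exact fun h => v.2 ((hfix v).mp (congrArg Subtype.val h))

lemma IsMaxMatchingInvolution.matchingNumber_le_delVert (hf : IsMaxMatchingInvolution G f)
    (hx : f x = x) : matchingNumber G ≤ matchingNumber (delVert G x) := by
  have hs : Set.MapsTo f {v | v ≠ x} {v | v ≠ x} := fun v hv hfv =>
    hv ((hf.1.1 v).symm.trans (by rw [hfv, hx]))
  have hF := hf.1.restrict hs
  have hle : #(matchingOf (hs.restrict f _ _)) ≤ matchingNumber (delVert G x) :=
    hF.isMatchingFinset.card_le_matchingNumber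
  have hcard : 2 * #(matchingOf (hs.restrict f _ _)) = 2 * #(matchingOf f) := by
    rw [two_mul_card_matchingOf hF.1, two_mul_card_matchingOf hf.1.1]
    refine card_bij (fun w _ => w.val) (fun w hw => ?_) (fun _ _ _ _ => Subtype.ext) fun v hv => ?_
    · simpa [Subtype.ext_iff] using hw
    · have hv : f v ≠ v := by simpa using hv
      exact ⟨⟨v, fun h => hv (h ▸ hx)⟩, by simpa [Subtype.ext_iff] using hv, rfl⟩
  have := hf.card_matchingOf
  omega

end DeleteVertex

section Gallai

variable {V : Type*} [Fintype V] {G : SimpleGraph V} {f g : V → V}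

lemma IsMaxMatchingInvolution.exists_fixing_of_adj (hf : IsMaxMatchingInvolution G f)
    (hg : IsMaxMatchingInvolution G g) {u v w : V} (hu : f u = u) (hv : f v = v) (huv : u ≠ v)
    (hgw : g w = w) (huw : G.Adj u w) :
    ∃ h, IsMaxMatchingInvolution G h ∧ h w = w ∧ h v = v := by
  obtain ⟨T, huT, hTf, hTg, hcard⟩ := exists_invariant_card_fixed_le_two hf.1.1 hg.1.1 u
  have heq := hf.card_fixed_inter_eq hg hTf hTg
  by_cases hwT : w ∈ T
  · refine ⟨T.piecewise g f, hg.piecewise hf hTg hTf, by rw [T.piecewise_eq_of_mem _ _ hwT, hgw],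
      ?_⟩
    -- `f` and `g` have equally many, hence at most one, fixed points in `T`
    have hvT : v ∉ T := by
      intro hvT
      have := card_le_card (s := {u, v}) (t := {x ∈ T | f x = x}) (by
        simp [insert_subset_iff, huT, hvT, hu, hv])
      rw [card_pair huv] at this
      omega
    rw [T.piecewise_eq_of_notMem _ _ hvT, hv]
  · exact absurd huw <| (hf.piecewise hg hTf hTg).not_adj
      (by rw [T.piecewise_eq_of_mem _ _ huT, hu]) (by rw [T.piecewise_eq_of_notMem _ _ hwT, hgw])

theorem IsMaxMatchingInvolution.not_reachable_of_fixed
    (hmiss : ∀ x, ∃ g, IsMaxMatchingInvolution G g ∧ g x = x) (hf : IsMaxMatchingInvolution G f)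
    {u v : V} (hu : f u = u) (hv : f v = v) (huv : u ≠ v) : ¬G.Reachable u v := by
  intro hr
  induction hd : G.dist u v using Nat.strong_induction_on generalizing f u v with
  | _ d ih =>
    obtain ⟨p, hp⟩ := hr.exists_walk_length_eq_dist
    cases p with
    | nil => exact huv rfl
    | @cons _ w _ huw q =>
      by_cases hwv : w = v
      · exact hf.not_adj hu hv (hwv ▸ huw)
      obtain ⟨g, hg, hgw⟩ := hmiss w
      obtain ⟨h, hh, hhw, hhv⟩ := hf.exists_fixing_of_adj hg hu hv huv hgw huw
      have hlt : G.dist w v < d := by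
        have := SimpleGraph.dist_le q
        simp only [SimpleGraph.Walk.length_cons] at hp
        omega
      exact ih _ hlt hh hhw hhv hwv ⟨q⟩ rfl

lemma factorCritical_induce_supp_of_forall_exists_fixed
    (hmiss : ∀ x, ∃ f, IsMaxMatchingInvolution G f ∧ f x = x)
    (c : G.ConnectedComponent) : FactorCritical (G.induce c.supp) := by
  refine ⟨c.connected_toSimpleGraph, fun x => ?_⟩
  obtain ⟨f, hf, hfx⟩ := hmiss x
  have hc : Set.MapsTo f c.supp c.supp := fun v hv => by
    by_cases hfv : f v = v
    · rwa [hfv]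
    · exact c.mem_supp_of_adj_mem_supp hv (hf.1.2 v hfv)
  refine (hf.1.restrict hc).hasPerfectMatchingFinset_delVert fun v => ⟨fun hv => ?_, ?_⟩
  · by_contra hvx
    exact hf.not_reachable_of_fixed hmiss (congrArg Subtype.val hv) hfx
      (fun h => hvx (Subtype.ext h)) (c.reachable_of_mem_supp v.2 x.2)
  · rintro rfl
    exact Subtype.ext hfx

end Gallai

section Friendly

variable {V : Type*} {G : SimpleGraph V}

lemma chromaticIndex_le_card_of_cover {P : Finset (Finset (Sym2 V))}
    (hP : ∀ M ∈ P, IsMatchingFinset G M) (hcover : ∀ e ∈ G.edgeSet, ∃ M ∈ P, e ∈ M) :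
    chromaticIndex G ≤ #P := by
  let color : Sym2 V → ℕ := fun e =>
    if h : ∃ M ∈ P, e ∈ M then P.equivFin ⟨h.choose, h.choose_spec.1⟩ else 0
  refine Nat.sInf_le ⟨color, fun e he => ?_, fun e he e' he' hne hshare hc => ?_⟩
  · simp only [color, dif_pos (hcover e he), Fin.is_lt]
  · have h := hcover e he
    have h' := hcover e' he'
    simp only [color, dif_pos h, dif_pos h'] at hc
    have hM : h.choose = h'.choose :=
      Subtype.ext_iff.mp (P.equivFin.injective (Fin.val_injective hc))
    obtain ⟨v, hv, hv'⟩ := hshare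
    exact (hP _ h.choose_spec.1).2 e h.choose_spec.2 e' (hM ▸ h'.choose_spec.2) hne v ⟨hv, hv'⟩

variable [Fintype V]

lemma card_filter_covering_le_degree {P : Finset (Finset (Sym2 V))}
    (hP : ∀ M ∈ P, IsMatchingFinset G M) (hdisj : ∀ M ∈ P, ∀ N ∈ P, M ≠ N → Disjoint M N)
    (x : V) : #{M ∈ P | ∃ e ∈ M, x ∈ e} ≤ G.degree x := by
  rw [← G.card_incidenceFinset_eq_degree]
  refine card_le_card_of_forall_subsingleton (fun M e => e ∈ M) (fun M hM => ?_)
    fun e _ M hM N hN => ?_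
  · obtain ⟨hMP, e, he, hx⟩ := mem_filter.mp hM
    exact ⟨e, G.mem_incidenceFinset x e |>.mpr ⟨(hP M hMP).1 he, hx⟩, he⟩
  · simp only [Set.mem_ofPred_eq, mem_filter] at hM hN
    by_contra hMN
    exact disjoint_left.mp (hdisj M hM.1.1 N hN.1.1 hMN) hM.2 hN.2

lemma IsMatchingFinset.exists_isMaxMatchingInvolution_fixed {M : Finset (Sym2 V)}
    (hM : IsMatchingFinset G M) (hcard : #M = matchingNumber G) {x : V} (hx : ∀ e ∈ M, x ∉ e) :
    ∃ f, IsMaxMatchingInvolution G f ∧ f x = x := by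
  obtain ⟨f, hf, hfM, hfix⟩ := hM.exists_isMatchingInvolution
  refine ⟨f, ⟨hf, ?_⟩, hfix x hx⟩
  rw [← hcard, ← hfM]
  exact card_fixed_add_two_mul_card_matchingOf hf.1

lemma Friendly.exists_isMaxMatchingInvolution_fixed (hG : Friendly G)
    (hclassII : chromaticIndex G = G.maxDegree + 1) (x : V) :
    ∃ f, IsMaxMatchingInvolution G f ∧ f x = x := by
  obtain ⟨P, hPmax, hcover, hdisj⟩ := hG
  have hP : ∀ M ∈ P, IsMatchingFinset G M := fun M hM => (hPmax M hM).1
  obtain ⟨M, hMP, hx⟩ : ∃ M ∈ P, ∀ e ∈ M, x ∉ e := by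
    by_contra! h
    have hχ := chromaticIndex_le_card_of_cover hP fun e he =>
      (hcover e).mp (G.mem_edgeFinset.mpr he)
    have hdeg := card_filter_covering_le_degree hP hdisj x
    rw [filter_true_of_mem h] at hdeg
    have := G.degree_le_maxDegree x
    omega
  exact (hPmax M hMP).1.exists_isMaxMatchingInvolution_fixed (hPmax M hMP).2 hx

end Friendly

theorem stmt_13 {V : Type*} [Fintype V] (G : SimpleGraph V) (hG : Friendly G)
    (hclassII : chromaticIndex G = G.maxDegree + 1) :
    (∀ x : V, matchingNumber (delVert G x) = matchingNumber G) ∧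
    ∀ c : G.ConnectedComponent, FactorCritical (G.induce c.supp) := by
  have hmiss := hG.exists_isMaxMatchingInvolution_fixed hclassII
  refine ⟨fun x => le_antisymm ?_ ?_, factorCritical_induce_supp_of_forall_exists_fixed hmiss⟩
  · exact matchingNumber_le_of_embedding (SimpleGraph.Embedding.induce _)
  · obtain ⟨f, hf, hfx⟩ := hmiss x
    exact hf.matchingNumber_le_delVert hfx
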